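/- Let u be a nonzero Laurent polynomial over ℂ with u⋆ = u. Then the sum Σ mz(u, z₀), taken over all z₀ on the unit circle 𝕋 = {z ∈ ℂ : |z| = 1} with u(z₀) = 0, is an even integer. -/

import Mathlib

open LaurentPolynomial Matrix
open scoped Classical

noncomputable section

abbrev LP := LaurentPolynomial ℂ

namespace QT

/-- The coefficient of `z^k` in a Laurent polynomial. -/
def coeff (u : LP) (k : ℤ) : ℂ := (AddMonoidAlgebra.coeff u) k

/-- The Hermitian conjugate `u⋆(z) = Σ conj(u(k)) z^{-k}`. -/
def hstar (u : LP) : LP :=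
  AddMonoidAlgebra.ofCoeff <|
    Finsupp.mapDomain (fun k => -k)
      (Finsupp.mapRange (starRingEnd ℂ) (map_zero _) (AddMonoidAlgebra.coeff u))

/-- `u` has symmetry with type `ε z^c`, i.e. `u(k) = ε u(c-k)` for all `k`. -/
def SymT (u : LP) (ε : ℂ) (c : ℤ) : Prop := ∀ k : ℤ, coeff u k = ε * coeff u (c - k)

def Sgn (ε : ℂ) : Prop := ε = 1 ∨ ε = -1

/-- `u` has symmetry (with some type). -/
def HasSym (u : LP) : Prop := ∃ ε c, Sgn ε ∧ SymT u ε c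

/-- The Laurent polynomial `z - a`. -/
def zsub (a : ℂ) : LP := T 1 - LaurentPolynomial.C a

/-- `m` is the multiplicity of `z₀` as a zero of `u`. -/
def mzIs (u : LP) (z₀ : ℂ) (m : ℕ) : Prop := zsub z₀ ^ m ∣ u ∧ ¬ zsub z₀ ^ (m + 1) ∣ u

/-- The multiplicity of `z₀` as a zero of `u`, as a function. -/
def mzF (u : LP) (z₀ : ℂ) : ℕ := sSup {m : ℕ | zsub z₀ ^ m ∣ u}

/-- The difference-of-(Hermitian)-squares property with respect to symmetry type `ε z^c`. -/
def DOS (u : LP) (ε : ℂ) (c : ℤ) : Prop :=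
  ∃ (u₁ u₂ : LP) (ε₁ ε₂ : ℂ) (c₁ c₂ : ℤ),
    Sgn ε₁ ∧ Sgn ε₂ ∧ SymT u₁ ε₁ c₁ ∧ SymT u₂ ε₂ c₂ ∧
    u₁ * hstar u₁ - u₂ * hstar u₂ = u ∧ ε₁ * ε₂ = ε ∧ c₁ - c₂ = c

/-- Degree: the largest exponent with nonzero coefficient (0 for the zero polynomial). -/
def degL (u : LP) : ℤ :=
  if h : u = 0 then 0
  else (AddMonoidAlgebra.coeff u).support.max' (Finsupp.support_nonempty_iff.mpr (mt AddMonoidAlgebra.coeff_eq_zero.mp h))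

/-- Lower degree: the smallest exponent with nonzero coefficient (0 for zero). -/
def ldegL (u : LP) : ℤ :=
  if h : u = 0 then 0
  else (AddMonoidAlgebra.coeff u).support.min' (Finsupp.support_nonempty_iff.mpr (mt AddMonoidAlgebra.coeff_eq_zero.mp h))

/-- Length `deg - ldeg`, with `len 0 = ⊥`. -/
def lenL (u : LP) : WithBot ℤ := if u = 0 then ⊥ else ((degL u - ldegL u : ℤ) : WithBot ℤ)

/-- `g` is a greatest common divisor of `a` and `b`. -/
def IsGCD2 (g a b : LP) : Prop := g ∣ a ∧ g ∣ b ∧ ∀ e : LP, e ∣ a → e ∣ b → e ∣ g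

/-- `g` is a greatest common divisor of `a`, `b`, `c`, `d`. -/
def IsGCD4 (g a b c d : LP) : Prop :=
  g ∣ a ∧ g ∣ b ∧ g ∣ c ∧ g ∣ d ∧ ∀ e : LP, e ∣ a → e ∣ b → e ∣ c → e ∣ d → e ∣ g

/-- The Hermitian conjugate transpose of a matrix of Laurent polynomials. -/
def hstarM (A : Matrix (Fin 2) (Fin 2) LP) : Matrix (Fin 2) (Fin 2) LP :=
  fun i j => hstar (A j i)

def IsHerm (A : Matrix (Fin 2) (Fin 2) LP) : Prop := hstarM A = A

/-- `diag(1, -1)`. -/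
def Jmat : Matrix (Fin 2) (Fin 2) LP := Matrix.diagonal ![1, -1]

/-- A square matrix of Laurent polynomials is strongly invertible if its determinant is a
nonzero monomial. -/
def StrongInv (A : Matrix (Fin 2) (Fin 2) LP) : Prop :=
  ∃ (lam : ℂ) (k : ℤ), lam ≠ 0 ∧ A.det = LaurentPolynomial.C lam * T k

/-- Compatible symmetry for a `2×2` matrix of Laurent polynomials. -/
def CompatSym (A : Matrix (Fin 2) (Fin 2) LP) : Prop :=
  ∃ (ε ε' : Fin 2 → ℂ) (c c' : Fin 2 → ℤ),
    (∀ j, Sgn (ε j)) ∧ (∀ k, Sgn (ε' k)) ∧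
    ∀ j k, SymT (A j k) (ε j * ε' k) (c' k - c j)

/-- Substitution `z ↦ z²`. -/
def sqDom (u : LP) : LP :=
  AddMonoidAlgebra.ofCoeff <| Finsupp.mapDomain (fun k => 2 * k) (AddMonoidAlgebra.coeff u)

/-- Substitution `z ↦ -z`. -/
def negSub (u : LP) : LP :=
  (AddMonoidAlgebra.coeff u).sum fun k c => (AddMonoidAlgebra.ofCoeff (Finsupp.single k ((-1 : ℂ) ^ k * c)) : LP)

/-- The `γ`-coset `u^{[γ]}(z) = Σ_k u(γ + 2k) z^k`. -/
def cosetL (u : LP) (γ : ℤ) : LP :=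
  AddMonoidAlgebra.ofCoeff <|
    Finsupp.comapDomain (fun k : ℤ => γ + 2 * k) (AddMonoidAlgebra.coeff u)
      (by intro a _ b _ h; simp only at h; omega)

/-- Evaluation of a Laurent polynomial at a point. -/
def evalL (u : LP) (z : ℂ) : ℂ := (AddMonoidAlgebra.coeff u).sum fun k c => c * z ^ k

/-- `{a; b₁, b₂}_{Θ,(1,-1)}` is a quasi-tight framelet filter bank. -/
def QTFB (a Θ b₁ b₂ : LP) : Prop :=
  sqDom Θ * hstar a * a + hstar b₁ * b₁ - hstar b₂ * b₂ = Θ ∧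
  sqDom Θ * hstar a * negSub a + hstar b₁ * negSub b₁ - hstar b₂ * negSub b₂ = 0

/-- The matrix `N_{a,Θ|n_b}` built from the quotients `A`, `B`. -/
def Nmat (A B : LP) : Matrix (Fin 2) (Fin 2) LP :=
  LaurentPolynomial.C (2 : ℂ)⁻¹ •
    !![cosetL A 0 + cosetL B 0, cosetL A 1 - cosetL B 1;
       T 1 * (cosetL A 1 + cosetL B 1), cosetL A 0 - cosetL B 0]


/-!
Write `u = q(z) z^m` with `q` a polynomial and `q(0) ≠ 0`. Comparing lowest exponents in
`u⋆ = u` gives `deg q = -2m`, so `q` has an even number of roots counted with multiplicity,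
all of them nonzero. Since `⋆` is a ring endomorphism sending `z - a` to a unit multiple of
`z - 1/ā`, multiplicities are invariant under the inversion `a ↦ 1/ā` in the unit circle.
This inversion pairs off the roots off the circle, so its fixed points, the roots on the
circle, also carry even total multiplicity.
-/

open scoped Polynomial ComplexConjugate
open Polynomial (X toLaurent toLaurent_injective)

theorem exists_eq_toLaurent_mul_T {R : Type*} [CommRing R] (u : R[T;T⁻¹]) (hu : u ≠ 0) :
    ∃ (q : R[X]) (m : ℤ), q.coeff 0 ≠ 0 ∧ u = toLaurent q * T m := by
  obtain ⟨n, p, hp⟩ := exists_T_pow u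
  have hp0 : p ≠ 0 := by
    rintro rfl
    exact hu ((isUnit_T (n : ℤ)).mul_left_eq_zero.mp (by simpa using hp.symm))
  obtain ⟨q, hpq, hq⟩ := p.exists_eq_pow_rootMultiplicity_mul_and_not_dvd hp0 0
  refine ⟨q, p.rootMultiplicity 0 - n, by simpa [Polynomial.X_dvd_iff] using hq, ?_⟩
  calc u = toLaurent p * T (-n) := by rw [hp, mul_T_assoc, add_neg_cancel, T_zero, mul_one]
    _ = toLaurent q * T (p.rootMultiplicity 0 - n) := by
      conv_lhs => rw [hpq]
      rw [map_mul, map_pow, map_zero, sub_zero, Polynomial.toLaurent_X, T_pow, mul_one,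
        T_mul, mul_T_assoc, sub_eq_add_neg]

section CommSemiring

variable {R : Type*} [CommSemiring R]

theorem eq_of_toLaurent_mul_T_eq {p r : R[X]} {a b : ℤ} (hp : p.coeff 0 ≠ 0)
    (hr : r.coeff 0 ≠ 0) (h : toLaurent p * T a = toLaurent r * T b) : a = b := by
  wlog hab : a ≤ b generalizing p r a b
  · exact (this hr hp h.symm (by omega)).symm
  obtain ⟨n, hn⟩ := Int.eq_ofNat_of_zero_le (sub_nonneg.2 hab)
  have hpr : p = r * X ^ n := toLaurent_injective <| by
    rw [map_mul, map_pow, Polynomial.toLaurent_X, T_pow, mul_one, ← hn,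
      sub_eq_add_neg, ← mul_T_assoc, ← h, mul_T_assoc, add_neg_cancel, T_zero, mul_one]
  have hn0 : n = 0 := by
    by_contra hn0
    exact hp (by rw [hpr, Polynomial.coeff_mul_X_pow', if_neg (by omega)])
  omega

theorem toLaurent_dvd_toLaurent_iff {p f : R[X]} (hp : IsCoprime p X) :
    toLaurent p ∣ toLaurent f ↔ p ∣ f := by
  refine ⟨fun ⟨r, hr⟩ => ?_, map_dvd toLaurent⟩
  obtain ⟨n, s, hs⟩ := exists_T_pow r
  have hfs : f * X ^ n = p * s := toLaurent_injective <| by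
    rw [map_mul, map_mul, hs, Polynomial.toLaurent_X_pow, hr, mul_assoc]
  exact hp.pow_right.dvd_of_dvd_mul_right ⟨s, hfs⟩

end CommSemiring

theorem mapRingHom_toLaurent {R S : Type*} [Semiring R] [Semiring S] (f : R →+* S)
    (q : R[X]) :
    AddMonoidAlgebra.mapRingHom ℤ f (toLaurent q) = toLaurent (q.map f) := by
  have hext : (AddMonoidAlgebra.mapRingHom ℤ f).comp toLaurent =
      toLaurent.comp (Polynomial.mapRingHom f) := by
    refine Polynomial.ringHom_ext (fun a => ?_) ?_
    · simp [← single_eq_C, -single_eq_C_mul_T]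
    · simp [T, -single_eq_C_mul_T]
  exact congrArg (· q) hext

theorem evalL_eq_eval₂ (u : LP) {z : ℂ} (hz : z ≠ 0) :
    evalL u z = eval₂ (RingHom.id ℂ) (Units.mk0 z hz) u := by
  induction u using LaurentPolynomial.induction_on' with
  | add p q hp hq =>
    rw [map_add, ← hp, ← hq, evalL, evalL, evalL, AddMonoidAlgebra.coeff_add,
      Finsupp.sum_add_index']
    · simp
    · intros; ring
  | C_mul_T n a =>
    rw [eval₂_C_mul_T, evalL, ← single_eq_C_mul_T]
    simp [-single_eq_C_mul_T]

theorem evalL_toLaurent_mul_T (q : ℂ[X]) (m : ℤ) {z : ℂ} (hz : z ≠ 0) :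
    evalL (toLaurent q * T m) z = q.eval z * z ^ m := by
  simp [evalL_eq_eval₂ _ hz, Polynomial.eval₂_id]

theorem zsub_pow (a : ℂ) (k : ℕ) : zsub a ^ k = toLaurent ((X - Polynomial.C a) ^ k) := by
  rw [zsub, map_pow, map_sub, Polynomial.toLaurent_X, Polynomial.toLaurent_C]

theorem mzF_toLaurent_mul_T {f : ℂ[X]} (hf : f ≠ 0) (m : ℤ) {z : ℂ} (hz : z ≠ 0) :
    mzF (toLaurent f * T m) z = f.rootMultiplicity z := by
  have hcop (k : ℕ) : IsCoprime ((X - Polynomial.C z) ^ k) X := by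
    simpa using (Polynomial.isCoprime_X_sub_C_of_isUnit_sub (R := ℂ) (b := 0)
      (by simpa using hz)).pow_left (m := k)
  have hdvd : {k : ℕ | zsub z ^ k ∣ toLaurent f * T m} = Set.Iic (f.rootMultiplicity z) := by
    ext k
    rw [Set.mem_ofPred_eq, (isUnit_T m).dvd_mul_right, zsub_pow,
      toLaurent_dvd_toLaurent_iff (hcop k), Set.mem_Iic, Polynomial.le_rootMultiplicity_iff hf]
  rw [mzF, hdvd, csSup_Iic]

def hstarRingHom : LP →+* LP :=
  (invert : LP ≃ₐ[ℂ] LP).toRingHom.comp (AddMonoidAlgebra.mapRingHom ℤ (starRingEnd ℂ))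

theorem hstarRingHom_apply (u : LP) : hstarRingHom u = hstar u := by
  refine LaurentPolynomial.ext fun k => ?_
  have hneg : (AddMonoidAlgebra.coeff (hstar u)) (-(-k)) = conj (u.coeff (-k)) :=
    Finsupp.mapDomain_apply neg_injective _ _
  simpa [hstarRingHom] using hneg.symm

theorem hstarRingHom_T (n : ℤ) : hstarRingHom (T n) = T (-n) := by
  rw [hstarRingHom, RingHom.comp_apply, T, AddMonoidAlgebra.mapRingHom_single, map_one]
  exact invert_T n

theorem hstarRingHom_C (a : ℂ) :
    hstarRingHom (LaurentPolynomial.C a) = LaurentPolynomial.C (conj a) := by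
  rw [hstarRingHom, RingHom.comp_apply, ← single_eq_C, AddMonoidAlgebra.mapRingHom_single]
  exact invert_C _

theorem hstar_toLaurent_mul_T (q : ℂ[X]) (m : ℤ) :
    hstar (toLaurent q * T m) =
      toLaurent (q.map (starRingEnd ℂ)).reverse * T (-q.natDegree - m) := by
  have hrev := toLaurent_reverse (q.map (starRingEnd ℂ))
  rw [Polynomial.natDegree_map_eq_of_injective (RingHom.injective _)] at hrev
  rw [← hstarRingHom_apply, map_mul, hstarRingHom_T, hstarRingHom, RingHom.comp_apply,
    mapRingHom_toLaurent]
  simp [sub_eq_add_neg, mul_T_assoc, hrev]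

theorem hstar_zsub {a : ℂ} (ha : a ≠ 0) :
    hstar (zsub a) = LaurentPolynomial.C (-conj a) * T (-1) * zsub (conj a)⁻¹ := by
  have hT : (T (-1) * T 1 : LP) = 1 := by rw [← T_add, neg_add_cancel, T_zero]
  have hC : LaurentPolynomial.C (conj a) * LaurentPolynomial.C (conj a)⁻¹ = (1 : LP) := by
    rw [← map_mul, mul_inv_cancel₀ (by simpa using ha), map_one]
  rw [← hstarRingHom_apply, zsub, zsub, map_sub, hstarRingHom_T, hstarRingHom_C, map_neg]
  linear_combination (LaurentPolynomial.C (conj a)) * hT - T (-1) * hC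

/-- Inversion in the unit circle; it fixes `0`, since `0⁻¹ = 0`. -/
def circleInv (z : ℂ) : ℂ := (conj z)⁻¹

theorem circleInv_circleInv (z : ℂ) : circleInv (circleInv z) = z := by
  simp [circleInv]

theorem circleInv_ne_zero {z : ℂ} (hz : z ≠ 0) : circleInv z ≠ 0 := by
  simpa [circleInv] using hz

theorem circleInv_eq_self_iff {z : ℂ} (hz : z ≠ 0) : circleInv z = z ↔ ‖z‖ = 1 := by
  rw [circleInv, inv_eq_iff_eq_inv, ← mul_eq_one_iff_eq_inv₀ hz,
    ← Complex.normSq_eq_conj_mul_self, Complex.ofReal_eq_one, Complex.normSq_eq_norm_sq,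
    pow_eq_one_iff_of_nonneg (norm_nonneg z) two_ne_zero]

theorem zsub_pow_dvd_circleInv {u : LP} (hu : hstar u = u) {a : ℂ} (ha : a ≠ 0) {k : ℕ}
    (h : zsub a ^ k ∣ u) : zsub (circleInv a) ^ k ∣ u := by
  have := map_dvd hstarRingHom h
  rw [map_pow, hstarRingHom_apply, hstarRingHom_apply, hu, hstar_zsub ha, mul_pow] at this
  exact dvd_of_mul_left_dvd this

theorem mzF_circleInv {u : LP} (hu : hstar u = u) {a : ℂ} (ha : a ≠ 0) :
    mzF u (circleInv a) = mzF u a := by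
  refine congrArg sSup (Set.ext fun k => ⟨fun h => ?_, zsub_pow_dvd_circleInv hu ha⟩)
  simpa [circleInv_circleInv] using zsub_pow_dvd_circleInv hu (circleInv_ne_zero ha) h

theorem rootMultiplicity_circleInv {q : ℂ[X]} {m : ℤ} (hq : q ≠ 0)
    (hh : hstar (toLaurent q * T m) = toLaurent q * T m) (z : ℂ) :
    q.rootMultiplicity (circleInv z) = q.rootMultiplicity z := by
  rcases eq_or_ne z 0 with rfl | hz
  · simp [circleInv]
  · rw [← mzF_toLaurent_mul_T hq m hz, ← mzF_toLaurent_mul_T hq m (circleInv_ne_zero hz),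
      mzF_circleInv hh hz]

theorem even_natDegree_of_hstar_eq {q : ℂ[X]} {m : ℤ} (hq0 : q.coeff 0 ≠ 0)
    (hh : hstar (toLaurent q * T m) = toLaurent q * T m) : Even q.natDegree := by
  rw [hstar_toLaurent_mul_T] at hh
  have hq : q ≠ 0 := by rintro rfl; exact hq0 rfl
  have hm := eq_of_toLaurent_mul_T_eq (by
    rwa [Polynomial.coeff_zero_reverse, Ne, Polynomial.leadingCoeff_eq_zero,
      Polynomial.map_eq_zero]) hq0 hh
  exact (Int.even_coe_nat _).mp ⟨-m, by omega⟩

theorem even_sum_fixed_of_involutive {α : Type*} {s : Finset α} {f : α → ℕ}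
    {σ : α → α} (hσ : Function.Involutive σ) (hmem : ∀ x ∈ s, σ x ∈ s)
    (hf : ∀ x ∈ s, f (σ x) = f x) (hs : Even (∑ x ∈ s, f x)) :
    Even (∑ x ∈ s with σ x = x, f x) := by
  have hmoved : Even (∑ x ∈ s with σ x ≠ x, f x) := by
    rw [← ZMod.natCast_eq_zero_iff_even, Nat.cast_sum]
    refine Finset.sum_involution (fun x _ => σ x) (fun x hx => ?_)
      (fun x hx _ => (Finset.mem_filter.1 hx).2) (fun x hx => ?_) (fun x _ => hσ x)
    · rw [hf x (Finset.mem_filter.1 hx).1]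
      exact CharTwo.add_self_eq_zero _
    · obtain ⟨hxs, hx⟩ := Finset.mem_filter.1 hx
      simpa [hmem x hxs, hσ x] using Ne.symm hx
  rw [← Finset.sum_filter_add_sum_filter_not s (fun x => σ x = x)] at hs
  exact (Nat.even_add.mp hs).mpr hmoved

theorem even_sum_rootMultiplicity_fixed_of_involutive {K : Type*} [Field K] [IsAlgClosed K]
    {q : K[X]} {σ : K → K} (hσ : Function.Involutive σ) (hdeg : Even q.natDegree)
    (hmult : ∀ z, q.rootMultiplicity (σ z) = q.rootMultiplicity z) :
    Even (∑ z ∈ q.roots.toFinset with σ z = z, q.rootMultiplicity z) := by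
  refine even_sum_fixed_of_involutive hσ (fun z hz => ?_) (fun z _ => hmult z) ?_
  · rwa [Multiset.mem_toFinset, ← Multiset.count_pos, Polynomial.count_roots, hmult,
      ← Polynomial.count_roots, Multiset.count_pos, ← Multiset.mem_toFinset]
  · simp_rw [← Polynomial.count_roots]
    rwa [Multiset.toFinset_sum_count_eq, IsAlgClosed.card_roots_eq_natDegree]

/-- for a Hermitian Laurent polynomial, the total multiplicity of the
zeros on the unit circle is even (Lemma 3.13 of the paper). -/
theorem total_multiplicity_on_unit_circle_even
    (u : LP) (hu : u ≠ 0) (hh : hstar u = u) :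
    ∃ S : Finset ℂ,
      (∀ z : ℂ, z ∈ S ↔ ‖z‖ = 1 ∧ evalL u z = 0) ∧
      Even (∑ z ∈ S, mzF u z) := by
  obtain ⟨q, m, hq0, rfl⟩ := exists_eq_toLaurent_mul_T u hu
  have hq : q ≠ 0 := by rintro rfl; exact hq0 rfl
  have hmem (z : ℂ) : z ∈ {z ∈ q.roots.toFinset | circleInv z = z} ↔
      ‖z‖ = 1 ∧ evalL (toLaurent q * T m) z = 0 := by
    rcases eq_or_ne z 0 with rfl | hz
    · simp [← Polynomial.coeff_zero_eq_eval_zero, hq0]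
    · simp [Polynomial.mem_roots hq, circleInv_eq_self_iff hz, evalL_toLaurent_mul_T q m hz,
        zpow_ne_zero m hz, and_comm]
  have hne (z : ℂ) (hz : z ∈ {z ∈ q.roots.toFinset | circleInv z = z}) : z ≠ 0 :=
    norm_ne_zero_iff.mp (((hmem z).1 hz).1 ▸ one_ne_zero)
  refine ⟨_, hmem, ?_⟩
  rw [Finset.sum_congr rfl fun z hz => mzF_toLaurent_mul_T hq m (hne z hz)]
  exact even_sum_rootMultiplicity_fixed_of_involutive circleInv_circleInv
    (even_natDegree_of_hstar_eq hq0 hh) (rootMultiplicity_circleInv hq hh)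

end QT
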